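/- Fix λ, μ ∈ ℝ and k ∈ ℤ. Let M(λ,μ) be the 4×4 real matrix (1/4)·[[1+e^{−λ}−2e^{−μ}, 1+e^{−λ}+2e^{−μ}, 1−e^{−λ}, 1−e^{−λ}], [1+e^{−λ}+2e^{−μ}, 1+e^{−λ}−2e^{−μ}, 1−e^{−λ}, 1−e^{−λ}], [1−e^{−λ}, 1−e^{−λ}, 1+e^{−λ}−2e^{−μ}, 1+e^{−λ}+2e^{−μ}], [1−e^{−λ}, 1−e^{−λ}, 1+e^{−λ}+2e^{−μ}, 1+e^{−λ}−2e^{−μ}]], and let Q_k be the 4×4 real matrix (1/4)·[[−λ−2μ, −λ+2μ, λ−2π(2k+1), λ+2π(2k+1)], [−λ+2μ, −λ−2μ, λ+2π(2k+1), λ−2π(2k+1)], [λ+2π(2k+1), λ−2π(2k+1), −λ−2μ, −λ+2μ], [λ−2π(2k+1), λ+2π(2k+1), −λ+2μ, −λ−2μ]]. Then exp(Q_k) = M(λ,μ). -/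

import Mathlib

open Real

/-- The matrix `M(λ,μ)` with eigenvalues `1, e^{-λ}, -e^{-μ}, -e^{-μ}`. -/
noncomputable def Mlm (l m : ℝ) : Matrix (Fin 4) (Fin 4) ℝ :=
  (1 / 4 : ℝ) •
    !![1 + exp (-l) - 2 * exp (-m), 1 + exp (-l) + 2 * exp (-m), 1 - exp (-l), 1 - exp (-l);
       1 + exp (-l) + 2 * exp (-m), 1 + exp (-l) - 2 * exp (-m), 1 - exp (-l), 1 - exp (-l);
       1 - exp (-l), 1 - exp (-l), 1 + exp (-l) - 2 * exp (-m), 1 + exp (-l) + 2 * exp (-m);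
       1 - exp (-l), 1 - exp (-l), 1 + exp (-l) + 2 * exp (-m), 1 + exp (-l) - 2 * exp (-m)]

/-- The family of real logarithms `Q_k` of `M(λ,μ)`. -/
noncomputable def Qk (l m : ℝ) (k : ℤ) : Matrix (Fin 4) (Fin 4) ℝ :=
  (1 / 4 : ℝ) •
    !![-l - 2 * m, -l + 2 * m, l - 2 * π * (2 * k + 1), l + 2 * π * (2 * k + 1);
       -l + 2 * m, -l - 2 * m, l + 2 * π * (2 * k + 1), l - 2 * π * (2 * k + 1);
       l + 2 * π * (2 * k + 1), l - 2 * π * (2 * k + 1), -l - 2 * m, -l + 2 * m;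
       l - 2 * π * (2 * k + 1), l + 2 * π * (2 * k + 1), -l + 2 * m, -l - 2 * m]

/-!
`Q_k` and `M(λ,μ)` both lie in the image of the continuous ring homomorphism `eigenMatrix`
from `ℝ × ℝ × ℂ`, which therefore commutes with the exponential. `Q_k` is the image of
`(0, -λ, -μ + (2k+1)πi)`, whose exponential `(1, e^{-λ}, -e^{-μ})` is mapped to `M(λ,μ)`.
-/

theorem Prod.exp_def {𝔸 𝔹 : Type*} [NormedRing 𝔸] [NormedAlgebra ℚ 𝔸] [CompleteSpace 𝔸]
    [NormedRing 𝔹] [NormedAlgebra ℚ 𝔹] [CompleteSpace 𝔹] (x : 𝔸 × 𝔹) :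
    NormedSpace.exp x = (NormedSpace.exp x.1, NormedSpace.exp x.2) :=
  Prod.ext (Prod.fst_exp x) (Prod.snd_exp x)

theorem Complex.exp_add_odd_mul_pi_mul_I (x : ℂ) (k : ℤ) :
    Complex.exp (x + (2 * k + 1) * (π * Complex.I)) = -Complex.exp x := by
  simpa using Complex.exp_antiperiodic.odd_zsmul_antiperiodic k x

/-- `(a, b, z)` is sent to the matrix acting by `a` on `(1,1,1,1)`, by `b` on `(1,1,-1,-1)`, and
by `z` on the plane with basis `1 ↦ (1,-1,0,0)`, `I ↦ (0,0,1,-1)`. -/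
noncomputable def eigenMatrix : ℝ × ℝ × ℂ →+* Matrix (Fin 4) (Fin 4) ℝ where
  toFun p := (1 / 4 : ℝ) •
    !![p.1 + p.2.1 + 2 * p.2.2.re, p.1 + p.2.1 - 2 * p.2.2.re,
        p.1 - p.2.1 - 2 * p.2.2.im, p.1 - p.2.1 + 2 * p.2.2.im;
       p.1 + p.2.1 - 2 * p.2.2.re, p.1 + p.2.1 + 2 * p.2.2.re,
        p.1 - p.2.1 + 2 * p.2.2.im, p.1 - p.2.1 - 2 * p.2.2.im;
       p.1 - p.2.1 + 2 * p.2.2.im, p.1 - p.2.1 - 2 * p.2.2.im,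
        p.1 + p.2.1 + 2 * p.2.2.re, p.1 + p.2.1 - 2 * p.2.2.re;
       p.1 - p.2.1 - 2 * p.2.2.im, p.1 - p.2.1 + 2 * p.2.2.im,
        p.1 + p.2.1 - 2 * p.2.2.re, p.1 + p.2.1 + 2 * p.2.2.re]
  map_one' := by
    ext i j
    fin_cases i <;> fin_cases j <;> norm_num [Matrix.one_apply]
  map_mul' p q := by
    ext i j
    fin_cases i <;> fin_cases j <;> simp [Matrix.mul_apply, Fin.sum_univ_four] <;> ring
  map_zero' := by
    ext i j
    fin_cases i <;> fin_cases j <;> simp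
  map_add' p q := by
    ext i j
    fin_cases i <;> fin_cases j <;> simp <;> ring

theorem continuous_eigenMatrix : Continuous eigenMatrix :=
  continuous_matrix fun i j => by
    fin_cases i <;> fin_cases j <;> simp [eigenMatrix] <;> fun_prop

theorem Qk_eq_eigenMatrix (l m : ℝ) (k : ℤ) :
    Qk l m k = eigenMatrix (0, -l, -m + (2 * k + 1) * (π * Complex.I)) := by
  ext i j
  fin_cases i <;> fin_cases j <;> simp [Qk, eigenMatrix] <;> ring

theorem Mlm_eq_eigenMatrix (l m : ℝ) :
    Mlm l m = eigenMatrix (1, exp (-l), -(exp (-m) : ℂ)) := by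
  ext i j
  fin_cases i <;> fin_cases j <;> simp [Mlm, eigenMatrix, -Complex.ofReal_exp] <;> ring

attribute [local instance] Matrix.linftyOpNormedRing

theorem stmt_10 (l m : ℝ) (k : ℤ) :
    NormedSpace.exp (Qk l m k) = Mlm l m := by
  rw [Qk_eq_eigenMatrix]
  -- `erw`: the two ring structures on matrices agree only up to unfolding
  erw [← NormedSpace.map_exp _ continuous_eigenMatrix]
  simp only [Prod.exp_def, ← Real.exp_eq_exp_ℝ, ← Complex.exp_eq_exp_ℂ]
  rw [Complex.exp_add_odd_mul_pi_mul_I, Real.exp_zero, ← Complex.ofReal_neg, ← Complex.ofReal_exp,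
    Mlm_eq_eigenMatrix]
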